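/- Let K be a field and c ∈ ℤⁿ with c⁺ ≠ 0 and c⁻ ≠ 0. Let I ⊆ S = K[x₁,…,xₙ] be an ideal homogeneous with respect to the ℤⁿ/ℤc-grading, let ≺ and ≺' be term orders with x^{c⁺} ≺ x^{c⁻} and x^{c⁺} ≻' x^{c⁻}, and set M = in_≺(I), N = in_{≺'}(I). Then the map f : Mon(M) → Mon(N) defined by f(m) = max_≺ { in_{≺'}(p) : p ∈ I homogeneous with in_≺(p) = m } is well defined and is an arrow map with respect to the ℤⁿ/ℤc-grading and the term order ≺. -/
import Mathlib


open MvPolynomial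

/-- A term order on the monomial exponents of `K[x₁,…,xₙ]`: a strict total order on
`Fin n →₀ ℕ` with `0` smallest and compatible with addition. -/
def IsTermOrder (n : ℕ) (lt : (Fin n →₀ ℕ) → (Fin n →₀ ℕ) → Prop) : Prop :=
  (∀ u v : Fin n →₀ ℕ, lt u v ∨ u = v ∨ lt v u) ∧
  (∀ u v w : Fin n →₀ ℕ, lt u v → lt v w → lt u w) ∧
  (∀ u : Fin n →₀ ℕ, ¬ lt u u) ∧
  (∀ u : Fin n →₀ ℕ, u ≠ 0 → lt 0 u) ∧
  (∀ u v w : Fin n →₀ ℕ, lt u v → lt (u + w) (v + w))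

/-- `u` is the exponent of the `lt`-leading monomial `in_≺(f)` of `f`. -/
def IsLeadExp {n : ℕ} {K : Type*} [Field K] (lt : (Fin n →₀ ℕ) → (Fin n →₀ ℕ) → Prop)
    (f : MvPolynomial (Fin n) K) (u : Fin n →₀ ℕ) : Prop :=
  u ∈ f.support ∧ ∀ v ∈ f.support, v ≠ u → lt v u

/-- The initial ideal `in_≺(I)`, generated by the leading monomials of nonzero elements. -/
noncomputable def initialIdeal {n : ℕ} {K : Type*} [Field K]
    (lt : (Fin n →₀ ℕ) → (Fin n →₀ ℕ) → Prop) (I : Ideal (MvPolynomial (Fin n) K)) :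
    Ideal (MvPolynomial (Fin n) K) :=
  Ideal.span { p | ∃ f ∈ I, ∃ u, IsLeadExp lt f u ∧ p = monomial u 1 }

/-- `DistRel c u v ℓ` says that `u - v = ℓ·c` in `ℤⁿ`; then `d(x^u, x^v) = |ℓ|`. -/
def DistRel {n : ℕ} (c : Fin n → ℤ) (u v : Fin n →₀ ℕ) (ℓ : ℤ) : Prop :=
  ∀ i, (u i : ℤ) - (v i : ℤ) = ℓ * c i

/-- Two monomials have the same degree in the `ℤⁿ/ℤc`-grading iff `u - v ∈ ℤc`. -/
def SameDeg {n : ℕ} (c : Fin n → ℤ) (u v : Fin n →₀ ℕ) : Prop :=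
  ∃ ℓ : ℤ, DistRel c u v ℓ

/-- A polynomial is homogeneous for the `ℤⁿ/ℤc`-grading if all of its monomials
have the same degree. -/
def CHom {n : ℕ} {K : Type*} [Field K] (c : Fin n → ℤ) (f : MvPolynomial (Fin n) K) : Prop :=
  ∀ u ∈ f.support, ∀ v ∈ f.support, SameDeg c u v

/-- An ideal is homogeneous for the `ℤⁿ/ℤc`-grading if it is generated by homogeneous
elements. -/
def CHomIdeal {n : ℕ} {K : Type*} [Field K] (c : Fin n → ℤ)
    (I : Ideal (MvPolynomial (Fin n) K)) : Prop :=
  ∃ G : Set (MvPolynomial (Fin n) K), (∀ g ∈ G, CHom c g) ∧ I = Ideal.span G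

/-- The exponent vector `c⁺` of a vector `c ∈ ℤⁿ`. -/
noncomputable def cpos {n : ℕ} (c : Fin n → ℤ) : Fin n →₀ ℕ :=
  Finsupp.equivFunOnFinite.symm fun i => (c i).toNat

/-- The exponent vector `c⁻` of a vector `c ∈ ℤⁿ`. -/
noncomputable def cneg {n : ℕ} (c : Fin n → ℤ) : Fin n →₀ ℕ :=
  Finsupp.equivFunOnFinite.symm fun i => (-(c i)).toNat

/-- `Mon M`: the set of (exponents of) monomials lying in `M`. -/
def Mon {n : ℕ} {K : Type*} [Field K] (M : Ideal (MvPolynomial (Fin n) K)) :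
    Set (Fin n →₀ ℕ) :=
  { u | monomial u 1 ∈ M }

/-- `f` (as a map on exponent vectors) restricts to an arrow map `Mon M → Mon N`
with respect to the `ℤⁿ/ℤc`-grading and the term order `lt`:
(1) it is a degree-preserving bijection with `m ⪰ f(m)`;
(2) `d(m', f(m')) ≤ d(m, f(m))` for every multiple `m'` of `m ∈ Mon M`;
(3) `d(f⁻¹(m'), m') ≤ d(f⁻¹(m), m)` for every `m ∈ Mon N` and multiple `m'` of `m`. -/
def IsArrowMap {n : ℕ} {K : Type*} [Field K] (c : Fin n → ℤ)
    (lt : (Fin n →₀ ℕ) → (Fin n →₀ ℕ) → Prop)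
    (M N : Ideal (MvPolynomial (Fin n) K)) (f : (Fin n →₀ ℕ) → (Fin n →₀ ℕ)) : Prop :=
  Set.BijOn f (Mon M) (Mon N) ∧
  (∀ u ∈ Mon M, SameDeg c u (f u)) ∧
  (∀ u ∈ Mon M, f u = u ∨ lt (f u) u) ∧
  (∀ u ∈ Mon M, ∀ (w : Fin n →₀ ℕ) (ℓ ℓ' : ℤ),
    DistRel c u (f u) ℓ → DistRel c (u + w) (f (u + w)) ℓ' → |ℓ'| ≤ |ℓ|) ∧
  (∀ u ∈ Mon M, ∀ u' ∈ Mon M, ∀ (w : Fin n →₀ ℕ) (ℓ ℓ' : ℤ),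
    f u' = f u + w → DistRel c u (f u) ℓ → DistRel c u' (f u') ℓ' → |ℓ'| ≤ |ℓ|)

/-- `OppLead c lt lt' I u v`: there is a homogeneous `p ∈ I` with `in_≺(p) = x^u` and
`in_≺'(p) = x^v`. -/
def OppLead {n : ℕ} {K : Type*} [Field K] (c : Fin n → ℤ)
    (lt lt' : (Fin n →₀ ℕ) → (Fin n →₀ ℕ) → Prop)
    (I : Ideal (MvPolynomial (Fin n) K)) (u v : Fin n →₀ ℕ) : Prop :=
  ∃ p ∈ I, CHom c p ∧ IsLeadExp lt p u ∧ IsLeadExp lt' p v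

/-- `v = max_≺ { in_≺'(p) : p ∈ I homogeneous with in_≺(p) = x^u }`. -/
def MaxOppLead {n : ℕ} {K : Type*} [Field K] (c : Fin n → ℤ)
    (lt lt' : (Fin n →₀ ℕ) → (Fin n →₀ ℕ) → Prop)
    (I : Ideal (MvPolynomial (Fin n) K)) (u v : Fin n →₀ ℕ) : Prop :=
  OppLead c lt lt' I u v ∧ ∀ v', OppLead c lt lt' I u v' → v' = v ∨ lt v' v

section Aux

variable {n : ℕ} {c : Fin n → ℤ} {lt lt' : (Fin n →₀ ℕ) → (Fin n →₀ ℕ) → Prop}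

lemma distRel_refl (u : Fin n →₀ ℕ) : DistRel c u u 0 := fun i => by simp

lemma distRel_symm {u v ℓ} (h : DistRel c u v ℓ) : DistRel c v u (-ℓ) := fun i => by
  have := h i; linarith [h i]

lemma distRel_trans {u v w ℓ ℓ'} (h : DistRel c u v ℓ) (h' : DistRel c v w ℓ') :
    DistRel c u w (ℓ + ℓ') := fun i => by
  have h1 := h i; have h2 := h' i; nlinarith [h i, h' i]

lemma distRel_add_right {u v ℓ} (w : Fin n →₀ ℕ) (h : DistRel c u v ℓ) :
    DistRel c (u + w) (v + w) ℓ := fun i => by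
  have := h i; simp only [Finsupp.add_apply]; push_cast; linarith

lemma sameDeg_refl (u : Fin n →₀ ℕ) : SameDeg c u u := ⟨0, distRel_refl u⟩

lemma sameDeg_symm {u v : Fin n →₀ ℕ} (h : SameDeg c u v) : SameDeg c v u :=
  ⟨-h.choose, distRel_symm h.choose_spec⟩

lemma sameDeg_trans {u v w : Fin n →₀ ℕ} (h : SameDeg c u v) (h' : SameDeg c v w) :
    SameDeg c u w :=
  ⟨_, distRel_trans h.choose_spec h'.choose_spec⟩

lemma cpos_apply (c : Fin n → ℤ) (i : Fin n) : cpos c i = (c i).toNat := rfl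
lemma cneg_apply (c : Fin n → ℤ) (i : Fin n) : cneg c i = (-(c i)).toNat := rfl

lemma exists_pos (hcp : cpos c ≠ 0) : ∃ i, 0 < c i := by
  obtain ⟨i, hi⟩ := Finsupp.ne_iff.mp hcp
  exact ⟨i, by simp only [cpos_apply, Finsupp.coe_zero, Pi.zero_apply] at hi; omega⟩

lemma exists_neg (hcn : cneg c ≠ 0) : ∃ i, c i < 0 := by
  obtain ⟨i, hi⟩ := Finsupp.ne_iff.mp hcn
  exact ⟨i, by simp only [cneg_apply, Finsupp.coe_zero, Pi.zero_apply] at hi; omega⟩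

lemma distRel_unique (hcp : cpos c ≠ 0) {u v ℓ ℓ'} (h : DistRel c u v ℓ)
    (h' : DistRel c u v ℓ') : ℓ = ℓ' := by
  obtain ⟨i, hi⟩ := exists_pos hcp
  have h1 := h i; have h2 := h' i
  have : ℓ * c i = ℓ' * c i := by linarith
  exact mul_right_cancel₀ (by omega) this

lemma distRel_zero_eq {u v : Fin n →₀ ℕ} (h : DistRel c u v 0) : u = v := by
  ext i; have := h i; omega

/-- The key combinatorial identity: `u - v = ℓ c` with `ℓ ≥ 0` gives
`u + ℓ c⁻ = v + ℓ c⁺` in `ℕⁿ`. -/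
lemma distRel_nat_eq {u v : Fin n →₀ ℕ} {ℓ : ℤ} (h : DistRel c u v ℓ) (hℓ : 0 ≤ ℓ) :
    u + ℓ.toNat • cneg c = v + ℓ.toNat • cpos c := by
  ext i
  simp only [Finsupp.add_apply, Finsupp.smul_apply, smul_eq_mul, cpos_apply, cneg_apply]
  have hi := h i
  have hk : (ℓ.toNat : ℤ) = ℓ := Int.toNat_of_nonneg hℓ
  rcases le_or_gt 0 (c i) with hd | hd
  · have e1 : (-(c i)).toNat = 0 := by omega
    have e2 : ((c i).toNat : ℤ) = c i := Int.toNat_of_nonneg hd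
    have : (ℓ.toNat * (c i).toNat : ℤ) = ℓ * c i := by rw [hk, e2]
    push_cast at this ⊢
    rw [e1]; push_cast; linarith
  · have e1 : (c i).toNat = 0 := by omega
    have e2 : ((-(c i)).toNat : ℤ) = -(c i) := Int.toNat_of_nonneg (by omega)
    have : (ℓ.toNat * (-(c i)).toNat : ℤ) = ℓ * (-(c i)) := by rw [hk, e2]
    rw [e1]
    have goal' : (u i : ℤ) + ℓ.toNat * (-(c i)).toNat = v i := by
      rw [this]; linarith
    push_cast at goal'
    exact_mod_cast goal'

lemma termOrder_smul (hlt : IsTermOrder n lt) {a b : Fin n →₀ ℕ} (h : lt a b) :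
    ∀ k : ℕ, 1 ≤ k → lt (k • a) (k • b) := by
  obtain ⟨htri, htrans, hirr, hzero, hadd⟩ := hlt
  intro k hk
  induction k with
  | zero => omega
  | succ m ih =>
    rcases Nat.eq_or_lt_of_le hk with h1 | h1
    · simpa [← h1] using h
    · have hm : 1 ≤ m := by omega
      have h2 := ih hm
      have h3 : lt (m • a + a) (m • b + a) := hadd _ _ _ h2
      have h4 : lt (m • b + a) (m • b + b) := by
        have := hadd _ _ (m • b) h
        simpa [add_comm] using this
      have := htrans _ _ _ h3 h4
      simpa [succ_nsmul, add_comm] using this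

lemma termOrder_cancel (hlt : IsTermOrder n lt) {a b w : Fin n →₀ ℕ}
    (h : lt (a + w) (b + w)) : lt a b := by
  obtain ⟨htri, htrans, hirr, hzero, hadd⟩ := hlt
  rcases htri a b with h1 | h1 | h1
  · exact h1
  · subst h1; exact absurd h (hirr _)
  · exact absurd (htrans _ _ _ h (hadd _ _ _ h1)) (hirr _)

/-- If `u - v = ℓ c` with `ℓ > 0` and `x^{c⁺} ≺ x^{c⁻}` then `u ≺ v`. -/
lemma lt_of_distRel_pos (hlt : IsTermOrder n lt) (hlo : lt (cpos c) (cneg c))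
    {u v : Fin n →₀ ℕ} {ℓ : ℤ} (h : DistRel c u v ℓ) (hℓ : 0 < ℓ) : lt u v := by
  have key := distRel_nat_eq h hℓ.le
  have hk : 1 ≤ ℓ.toNat := by omega
  have h1 : lt (ℓ.toNat • cpos c) (ℓ.toNat • cneg c) := termOrder_smul hlt hlo _ hk
  have h2 : lt (v + ℓ.toNat • cpos c) (v + ℓ.toNat • cneg c) := by
    have := hlt.2.2.2.2 _ _ v h1
    simpa [add_comm] using this
  rw [← key] at h2
  exact termOrder_cancel hlt (by simpa [add_comm] using h2)

end Aux
section Aux2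

variable {n : ℕ} {c : Fin n → ℤ} {lt lt' : (Fin n →₀ ℕ) → (Fin n →₀ ℕ) → Prop}

lemma termOrder_asymm (hlt : IsTermOrder n lt) {a b : Fin n →₀ ℕ} (h : lt a b) : ¬ lt b a :=
  fun h' => hlt.2.2.1 a (hlt.2.1 _ _ _ h h')

lemma exists_max_finset (hlt : IsTermOrder n lt) (s : Finset (Fin n →₀ ℕ)) (hs : s.Nonempty) :
    ∃ m ∈ s, ∀ x ∈ s, x = m ∨ lt x m := by
  classical
  induction s using Finset.induction with
  | empty => exact absurd hs (by simp)
  | @insert a s ha ih =>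
    rcases s.eq_empty_or_nonempty with h | h
    · subst h; exact ⟨a, by simp, by simp⟩
    · obtain ⟨m, hm, hmax⟩ := ih h
      rcases hlt.1 a m with h1 | h1 | h1
      · refine ⟨m, Finset.mem_insert_of_mem hm, ?_⟩
        intro x hx
        rcases Finset.mem_insert.mp hx with rfl | hx
        · exact Or.inr h1
        · exact hmax x hx
      · subst h1
        exact ⟨a, Finset.mem_insert_self _ _, fun x hx => by
          rcases Finset.mem_insert.mp hx with rfl | hx
          · exact Or.inl rfl
          · exact hmax x hx⟩
      · refine ⟨a, Finset.mem_insert_self _ _, ?_⟩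
        intro x hx
        rcases Finset.mem_insert.mp hx with rfl | hx
        · exact Or.inl rfl
        · rcases hmax x hx with rfl | h2
          · exact Or.inr h1
          · exact Or.inr (hlt.2.1 _ _ _ h2 h1)

lemma exists_max_set (hlt : IsTermOrder n lt) {S : Set (Fin n →₀ ℕ)} (hfin : S.Finite)
    (hne : S.Nonempty) : ∃ m ∈ S, ∀ x ∈ S, x = m ∨ lt x m := by
  obtain ⟨m, hm, hmax⟩ := exists_max_finset hlt hfin.toFinset (by
    rwa [Set.Finite.toFinset_nonempty])
  exact ⟨m, hfin.mem_toFinset.mp hm, fun x hx => hmax x (hfin.mem_toFinset.mpr hx)⟩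

lemma sameDeg_finite (hcp : cpos c ≠ 0) (hcn : cneg c ≠ 0) (u : Fin n →₀ ℕ) :
    {v | SameDeg c u v}.Finite := by
  obtain ⟨i, hi⟩ := exists_pos hcp
  obtain ⟨j, hj⟩ := exists_neg hcn
  classical
  have key : ∀ v ∈ {v | SameDeg c u v}, ∃ ℓ ∈ Set.Icc (-(u j : ℤ)) (u i : ℤ),
      DistRel c u v ℓ := by
    rintro v ⟨ℓ, hℓ⟩
    refine ⟨ℓ, ⟨?_, ?_⟩, hℓ⟩
    · have := hℓ j; nlinarith [(v j).cast_nonneg (α := ℤ), (u j).cast_nonneg (α := ℤ)]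
    · have := hℓ i; nlinarith [(v i).cast_nonneg (α := ℤ), (u i).cast_nonneg (α := ℤ)]
  choose g hg1 hg2 using key
  have : Set.InjOn (fun x : {v // v ∈ {v | SameDeg c u v}} => g x.1 x.2) Set.univ := by
    intro a _ b _ hab
    have ha := hg2 a.1 a.2
    have hb := hg2 b.1 b.2
    simp only at hab
    rw [hab] at ha
    apply Subtype.ext
    ext i
    have h1 := ha i; have h2 := hb i
    omega
  have hfin : (Set.univ : Set {v // v ∈ {v | SameDeg c u v}}).Finite := by
    have himg : (fun x : {v // v ∈ {v | SameDeg c u v}} => g x.1 x.2) '' Set.univ ⊆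
        Set.Icc (-(u j : ℤ)) (u i : ℤ) := by
      rintro _ ⟨a, _, rfl⟩; exact hg1 a.1 a.2
    exact Set.Finite.of_finite_image ((Set.finite_Icc _ _).subset himg) this
  have : Finite {v // v ∈ {v | SameDeg c u v}} := Set.finite_univ_iff.mp hfin
  exact Set.toFinite _

lemma lt'_of_distRel_neg (hlt' : IsTermOrder n lt') (hlo' : lt' (cneg c) (cpos c))
    {u v : Fin n →₀ ℕ} {ℓ : ℤ} (h : DistRel c u v ℓ) (hℓ : ℓ < 0) : lt' u v := by
  have h' : DistRel (-c) u v (-ℓ) := fun i => by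
    have := h i; simp only [Pi.neg_apply]; ring_nf; linarith
  have hlo'' : lt' (cpos (-c)) (cneg (-c)) := by
    have e1 : cpos (-c) = cneg c := by ext i; simp [cpos_apply, cneg_apply]
    have e2 : cneg (-c) = cpos c := by ext i; simp [cpos_apply, cneg_apply]
    rw [e1, e2]; exact hlo'
  exact lt_of_distRel_pos hlt' hlo'' h' (by omega)

/-- nonpositivity of the distance scalar when `v ⪯ u`. -/
lemma distRel_nonpos (hcp : cpos c ≠ 0) (hlt : IsTermOrder n lt) (hlo : lt (cpos c) (cneg c))
    {u v : Fin n →₀ ℕ} {ℓ : ℤ} (h : DistRel c u v ℓ) (hle : v = u ∨ lt v u) : ℓ ≤ 0 := by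
  by_contra hpos
  push_neg at hpos
  have h1 : lt u v := lt_of_distRel_pos hlt hlo h hpos
  rcases hle with rfl | h2
  · exact hlt.2.2.1 _ h1
  · exact termOrder_asymm hlt h1 h2

end Aux2
section Comp

variable {n : ℕ} {K : Type*} [Field K] {c : Fin n → ℤ}
variable {lt lt' : (Fin n →₀ ℕ) → (Fin n →₀ ℕ) → Prop}

open Classical in
/-- The `ℤⁿ/ℤc`-homogeneous component of `p` in the degree class of `d`. -/
noncomputable def comp (c : Fin n → ℤ) (d : Fin n →₀ ℕ) (p : MvPolynomial (Fin n) K) :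
    MvPolynomial (Fin n) K :=
  ∑ w ∈ p.support, if SameDeg c d w then monomial w (coeff w p) else 0

open Classical in
lemma coeff_comp (d : Fin n →₀ ℕ) (p : MvPolynomial (Fin n) K) (z : Fin n →₀ ℕ) :
    coeff z (comp c d p) = if SameDeg c d z then coeff z p else 0 := by
  classical
  rw [comp, coeff_sum]
  simp only [apply_ite (coeff z), coeff_monomial, coeff_zero]
  by_cases hz : coeff z p = 0
  · rw [Finset.sum_eq_zero, eq_comm]
    · split_ifs <;> simp [hz]
    · intro b hb
      split_ifs with h1 h2
      · rw [h2, hz]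
      · rfl
      · rfl
  · have hzs : z ∈ p.support := mem_support_iff.mpr hz
    rw [Finset.sum_eq_single_of_mem z hzs]
    · split_ifs <;> simp_all
    · intro b _ hb
      split_ifs <;> simp_all

lemma coeff_comp_of {d z : Fin n →₀ ℕ} (p : MvPolynomial (Fin n) K) (hz : SameDeg c d z) :
    coeff z (comp c d p) = coeff z p := by rw [coeff_comp, if_pos hz]

lemma coeff_comp_not {d z : Fin n →₀ ℕ} (p : MvPolynomial (Fin n) K) (hz : ¬ SameDeg c d z) :
    coeff z (comp c d p) = 0 := by rw [coeff_comp, if_neg hz]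

lemma mem_support_comp {d z : Fin n →₀ ℕ} {p : MvPolynomial (Fin n) K} :
    z ∈ (comp c d p).support ↔ z ∈ p.support ∧ SameDeg c d z := by
  simp only [mem_support_iff, coeff_comp]
  by_cases h : SameDeg c d z <;> simp [h]

lemma comp_add (d : Fin n →₀ ℕ) (p q : MvPolynomial (Fin n) K) :
    comp c d (p + q) = comp c d p + comp c d q := by
  apply MvPolynomial.ext
  intro z
  simp only [coeff_comp, coeff_add]
  by_cases h : SameDeg c d z <;> simp [h]

lemma comp_zero (d : Fin n →₀ ℕ) : comp c d (0 : MvPolynomial (Fin n) K) = 0 := by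
  apply MvPolynomial.ext; intro z; simp [coeff_comp]

lemma comp_eq_self {d : Fin n →₀ ℕ} {p : MvPolynomial (Fin n) K}
    (h : ∀ w ∈ p.support, SameDeg c d w) : comp c d p = p := by
  apply MvPolynomial.ext; intro z
  rw [coeff_comp]
  by_cases hz : z ∈ p.support
  · rw [if_pos (h z hz)]
  · rw [notMem_support_iff] at hz
    by_cases h1 : SameDeg c d z <;> simp [h1, hz]

lemma comp_eq_zero {d : Fin n →₀ ℕ} {p : MvPolynomial (Fin n) K}
    (h : ∀ w ∈ p.support, ¬ SameDeg c d w) : comp c d p = 0 := by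
  apply MvPolynomial.ext; intro z
  rw [coeff_comp, coeff_zero]
  by_cases hz : z ∈ p.support
  · rw [if_neg (h z hz)]
  · rw [notMem_support_iff] at hz
    by_cases h1 : SameDeg c d z <;> simp [h1, hz]

lemma chom_comp (d : Fin n →₀ ℕ) (p : MvPolynomial (Fin n) K) : CHom c (comp c d p) := by
  intro x hx y hy
  rw [mem_support_comp] at hx hy
  exact sameDeg_trans (sameDeg_symm hx.2) hy.2

lemma comp_of_chom {d : Fin n →₀ ℕ} {p : MvPolynomial (Fin n) K} (hp : CHom c p) :
    comp c d p = p ∨ comp c d p = 0 := by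
  rcases Finset.eq_empty_or_nonempty p.support with h | ⟨w0, hw0⟩
  · right
    exact comp_eq_zero (fun w hw => by rw [h] at hw; exact absurd hw (by simp))
  · by_cases h1 : SameDeg c d w0
    · left
      exact comp_eq_self (fun w hw => sameDeg_trans h1 (hp w0 hw0 w hw))
    · right
      refine comp_eq_zero (fun w hw hsd => h1 ?_)
      exact sameDeg_trans hsd (hp w hw w0 hw0)

lemma support_monomial_mul {m w : Fin n →₀ ℕ} {a : K} {x : MvPolynomial (Fin n) K}
    (hw : w ∈ (monomial m a * x).support) : ∃ t ∈ x.support, w = m + t := by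
  rw [mem_support_iff, coeff_monomial_mul'] at hw
  by_cases hm : m ≤ w
  · rw [if_pos hm] at hw
    refine ⟨w - m, ?_, ?_⟩
    · rw [mem_support_iff]; intro h; rw [h, mul_zero] at hw; exact hw rfl
    · rw [add_tsub_cancel_of_le hm]
  · rw [if_neg hm] at hw; exact absurd rfl hw

lemma comp_sum {d : Fin n →₀ ℕ} {α : Type*} (s : Finset α) (h : α → MvPolynomial (Fin n) K) :
    comp c d (∑ i ∈ s, h i) = ∑ i ∈ s, comp c d (h i) := by
  classical
  induction s using Finset.induction with
  | empty => simp [comp_zero]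
  | @insert a s ha ih => rw [Finset.sum_insert ha, Finset.sum_insert ha, comp_add, ih]

lemma sameDeg_add_left {m x y : Fin n →₀ ℕ} : SameDeg c (m + x) (m + y) ↔ SameDeg c x y := by
  constructor
  · rintro ⟨ℓ, hℓ⟩
    exact ⟨ℓ, fun i => by have := hℓ i; simp only [Finsupp.add_apply] at this; push_cast at this; linarith⟩
  · rintro ⟨ℓ, hℓ⟩
    exact ⟨ℓ, fun i => by
      have := hℓ i
      simp only [Finsupp.add_apply]
      push_cast
      linarith⟩

end Comp
section IdealLemmas

variable {n : ℕ} {K : Type*} [Field K] {c : Fin n → ℤ}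
variable {lt lt' : (Fin n →₀ ℕ) → (Fin n →₀ ℕ) → Prop}
variable {I : Ideal (MvPolynomial (Fin n) K)}

lemma comp_monomial_mul_mem {J : Ideal (MvPolynomial (Fin n) K)}
    {x : MvPolynomial (Fin n) K} (hx : ∀ d', comp c d' x ∈ J) (hxJ : x ∈ J)
    (m : Fin n →₀ ℕ) (a0 : K) (d : Fin n →₀ ℕ) :
    comp c d (monomial m a0 * x) ∈ J := by
  by_cases hex : ∃ w0 ∈ x.support, SameDeg c d (m + w0)
  · obtain ⟨w0, hw0s, hw0⟩ := hex
    have heq : comp c d (monomial m a0 * x) = monomial m a0 * comp c w0 x := by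
      apply MvPolynomial.ext
      intro z
      rw [coeff_comp, coeff_monomial_mul', coeff_monomial_mul', coeff_comp]
      by_cases hm : m ≤ z
      · rw [if_pos hm, if_pos hm]
        by_cases ht : coeff (z - m) x = 0
        · split_ifs <;> simp [ht]
        · have htz : m + (z - m) = z := add_tsub_cancel_of_le hm
          have hiff : SameDeg c d z ↔ SameDeg c w0 (z - m) := by
            constructor
            · intro h
              have h' : SameDeg c (m + w0) (m + (z - m)) :=
                sameDeg_trans (sameDeg_symm hw0) (by rwa [htz])
              exact sameDeg_add_left.mp h'
            · intro h
              have := (sameDeg_add_left (m := m)).mpr h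
              rw [htz] at this
              exact sameDeg_trans hw0 this
          by_cases hsd : SameDeg c d z
          · rw [if_pos hsd, if_pos (hiff.mp hsd)]
          · rw [if_neg hsd, if_neg (fun h => hsd (hiff.mpr h)), mul_zero]
      · rw [if_neg hm, if_neg hm]
        split_ifs <;> rfl
    rw [heq]
    exact Ideal.mul_mem_left _ _ (hx w0)
  · push_neg at hex
    have : comp c d (monomial m a0 * x) = 0 := by
      apply comp_eq_zero
      intro w hw hsd
      obtain ⟨t, ht, rfl⟩ := support_monomial_mul hw
      exact hex t ht hsd
    rw [this]
    exact J.zero_mem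

lemma comp_mem (hI : CHomIdeal c I) {g : MvPolynomial (Fin n) K} (hg : g ∈ I)
    (d : Fin n →₀ ℕ) : comp c d g ∈ I := by
  obtain ⟨G, hG, rfl⟩ := hI
  revert d
  refine Submodule.span_induction
    (p := fun x _ => ∀ d, comp c d x ∈ Ideal.span G) ?_ ?_ ?_ ?_ hg
  · intro x hxG d
    rcases comp_of_chom (hG x hxG) with h | h
    · rw [h]; exact Ideal.subset_span hxG
    · rw [h]; exact (Ideal.span G).zero_mem
  · intro d; rw [comp_zero]; exact (Ideal.span G).zero_mem
  · intro x y hxm hym hx hy d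
    rw [comp_add]
    exact (Ideal.span G).add_mem (hx d) (hy d)
  · intro a x hxm hx d
    have hax : a • x = ∑ m ∈ a.support, monomial m (coeff m a) * x := by
      rw [smul_eq_mul, ← Finset.sum_mul, ← as_sum]
    rw [hax, comp_sum]
    exact Submodule.sum_mem _ (fun m _ => comp_monomial_mul_mem hx hxm m _ d)

lemma chom_monomial_mul {p : MvPolynomial (Fin n) K} (hp : CHom c p) (m : Fin n →₀ ℕ) :
    CHom c (monomial m (1 : K) * p) := by
  intro x hx y hy
  obtain ⟨s, hs, rfl⟩ := support_monomial_mul hx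
  obtain ⟨t, ht, rfl⟩ := support_monomial_mul hy
  exact sameDeg_add_left.mpr (hp s hs t ht)

lemma lead_monomial_mul (hlt : IsTermOrder n lt) {p : MvPolynomial (Fin n) K}
    {u : Fin n →₀ ℕ} (h : IsLeadExp lt p u) (m : Fin n →₀ ℕ) :
    IsLeadExp lt (monomial m (1 : K) * p) (m + u) := by
  constructor
  · rw [mem_support_iff, coeff_monomial_mul, one_mul]
    exact mem_support_iff.mp h.1
  · intro v hv hne
    obtain ⟨t, ht, rfl⟩ := support_monomial_mul hv
    have htu : t ≠ u := fun he => hne (by rw [he])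
    have := hlt.2.2.2.2 _ _ m (h.2 t ht htu)
    simpa [add_comm] using this

lemma mon_add {M : Ideal (MvPolynomial (Fin n) K)} {u : Fin n →₀ ℕ} (hu : u ∈ Mon M)
    (w : Fin n →₀ ℕ) : u + w ∈ Mon M := by
  have : monomial (u + w) (1 : K) = monomial w 1 * monomial u 1 := by
    rw [monomial_mul, one_mul, add_comm]
  simp only [Mon, Set.mem_setOf_eq] at *
  rw [this]
  exact Ideal.mul_mem_left _ _ hu

lemma mon_initial (hI : CHomIdeal c I) (hlt : IsTermOrder n lt) {u : Fin n →₀ ℕ} :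
    u ∈ Mon (initialIdeal lt I) ↔ ∃ p ∈ I, CHom c p ∧ IsLeadExp lt p u := by
  constructor
  · intro hu
    simp only [Mon, Set.mem_setOf_eq, initialIdeal] at hu
    have hset : {p : MvPolynomial (Fin n) K | ∃ f ∈ I, ∃ u0, IsLeadExp lt f u0 ∧ p = monomial u0 1}
        = (fun s => monomial s (1 : K)) '' {u0 | ∃ f ∈ I, IsLeadExp lt f u0} := by
      ext q
      constructor
      · rintro ⟨f, hf, u0, hl, rfl⟩
        exact ⟨u0, ⟨f, hf, hl⟩, rfl⟩
      · rintro ⟨u0, ⟨f, hf, hl⟩, rfl⟩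
        exact ⟨f, hf, u0, hl, rfl⟩
    rw [hset, mem_ideal_span_monomial_image] at hu
    have hus : u ∈ (monomial u (1 : K)).support := by
      rw [mem_support_iff, coeff_monomial, if_pos rfl]
      exact one_ne_zero
    obtain ⟨u0, ⟨f, hf, hl⟩, hle⟩ := hu u hus
    have hcomp : comp c u0 f ∈ I := comp_mem hI hf u0
    have hl0 : IsLeadExp lt (comp c u0 f) u0 := by
      constructor
      · exact mem_support_comp.mpr ⟨hl.1, sameDeg_refl u0⟩
      · intro v hv hne
        exact hl.2 v (mem_support_comp.mp hv).1 hne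
    refine ⟨monomial (u - u0) 1 * comp c u0 f, Ideal.mul_mem_left _ _ hcomp,
      chom_monomial_mul (chom_comp u0 f) _, ?_⟩
    have := lead_monomial_mul hlt hl0 (u - u0)
    rwa [tsub_add_cancel_of_le hle] at this
  · rintro ⟨p, hp, _, hl⟩
    exact Ideal.subset_span ⟨p, hp, u, hl, rfl⟩

end IdealLemmas
section Neg

variable {n : ℕ} {K : Type*} [Field K] {c : Fin n → ℤ}
variable {lt lt' : (Fin n →₀ ℕ) → (Fin n →₀ ℕ) → Prop}
variable {I : Ideal (MvPolynomial (Fin n) K)}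

lemma cpos_neg (c : Fin n → ℤ) : cpos (-c) = cneg c := by
  ext i; simp [cpos_apply, cneg_apply]

lemma cneg_neg (c : Fin n → ℤ) : cneg (-c) = cpos c := by
  ext i; simp [cpos_apply, cneg_apply]

lemma distRel_neg {u v : Fin n →₀ ℕ} {ℓ : ℤ} :
    DistRel (-c) u v ℓ ↔ DistRel c u v (-ℓ) := by
  constructor <;> intro h i <;> have := h i <;> simp only [Pi.neg_apply] at * <;> linarith

lemma sameDeg_neg {u v : Fin n →₀ ℕ} : SameDeg (-c) u v ↔ SameDeg c u v := by
  constructor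
  · rintro ⟨ℓ, h⟩; exact ⟨-ℓ, distRel_neg.mp h⟩
  · rintro ⟨ℓ, h⟩; exact ⟨-ℓ, distRel_neg.mpr (by simpa using h)⟩

lemma chom_neg {p : MvPolynomial (Fin n) K} : CHom (-c) p ↔ CHom c p := by
  constructor <;> intro h x hx y hy
  · exact sameDeg_neg.mp (h x hx y hy)
  · exact sameDeg_neg.mpr (h x hx y hy)

lemma chomIdeal_neg (h : CHomIdeal c I) : CHomIdeal (-c) I := by
  obtain ⟨G, hG, rfl⟩ := h
  exact ⟨G, fun g hg => chom_neg.mpr (hG g hg), rfl⟩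

lemma oppLead_neg {u v : Fin n →₀ ℕ} :
    OppLead (-c) lt lt' I u v ↔ OppLead c lt lt' I u v := by
  constructor <;> rintro ⟨p, hp, hc, h1, h2⟩
  · exact ⟨p, hp, chom_neg.mp hc, h1, h2⟩
  · exact ⟨p, hp, chom_neg.mpr hc, h1, h2⟩

lemma maxOppLead_neg {u v : Fin n →₀ ℕ} :
    MaxOppLead (-c) lt lt' I u v ↔ MaxOppLead c lt lt' I u v := by
  constructor <;> rintro ⟨h1, h2⟩
  · exact ⟨oppLead_neg.mp h1, fun v' hv' => h2 v' (oppLead_neg.mpr hv')⟩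
  · exact ⟨oppLead_neg.mpr h1, fun v' hv' => h2 v' (oppLead_neg.mp hv')⟩

/-- Within a degree class, `lt'` is the reverse of `lt`. -/
lemma lt_rev_of_lt' (hlt : IsTermOrder n lt) (hlt' : IsTermOrder n lt')
    (hlo : lt (cpos c) (cneg c)) (hlo' : lt' (cneg c) (cpos c))
    {u v : Fin n →₀ ℕ} (hs : SameDeg c u v) (h : lt' u v) : lt v u := by
  obtain ⟨ℓ, hd⟩ := hs
  rcases lt_trichotomy ℓ 0 with h1 | h1 | h1
  · exact lt_of_distRel_pos hlt hlo (distRel_symm hd) (by omega)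
  · subst h1
    rw [distRel_zero_eq hd] at h
    exact absurd h (hlt'.2.2.1 v)
  · exact absurd h (termOrder_asymm hlt'
      (lt'_of_distRel_neg hlt' hlo' (distRel_symm hd) (by omega)))

lemma lt'_rev_of_lt (hlt : IsTermOrder n lt) (hlt' : IsTermOrder n lt')
    (hlo : lt (cpos c) (cneg c)) (hlo' : lt' (cneg c) (cpos c))
    {u v : Fin n →₀ ℕ} (hs : SameDeg c u v) (h : lt u v) : lt' v u :=
  lt_rev_of_lt' (c := -c) hlt' hlt (by rw [cpos_neg, cneg_neg]; exact hlo')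
    (by rw [cpos_neg, cneg_neg]; exact hlo) (sameDeg_neg.mpr hs) h

lemma oppLead_sameDeg {u v : Fin n →₀ ℕ} (h : OppLead c lt lt' I u v) : SameDeg c u v := by
  obtain ⟨p, _, hc, h1, h2⟩ := h
  exact hc u h1.1 v h2.1

lemma exists_maxOppLead (hcp : cpos c ≠ 0) (hcn : cneg c ≠ 0)
    (hlt : IsTermOrder n lt) (hlt' : IsTermOrder n lt') (hI : CHomIdeal c I)
    {u : Fin n →₀ ℕ} (hu : u ∈ Mon (initialIdeal lt I)) :
    ∃ v, MaxOppLead c lt lt' I u v := by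
  obtain ⟨p, hpI, hphom, hplead⟩ := (mon_initial hI hlt).mp hu
  have hne : p.support.Nonempty := ⟨u, hplead.1⟩
  obtain ⟨v0, hv0, hv0max⟩ := exists_max_finset hlt' p.support hne
  have hopp : OppLead c lt lt' I u v0 :=
    ⟨p, hpI, hphom, hplead, hv0, fun x hx hxne => (hv0max x hx).resolve_left hxne⟩
  have hfin : {v | OppLead c lt lt' I u v}.Finite :=
    (sameDeg_finite hcp hcn u).subset (fun v hv => oppLead_sameDeg hv)
  obtain ⟨m, hm, hmax⟩ := exists_max_set hlt hfin ⟨v0, hopp⟩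
  exact ⟨m, hm, hmax⟩

end Neg
section Core

variable {n : ℕ} {K : Type*} [Field K] {c : Fin n → ℤ}
variable {lt lt' : (Fin n →₀ ℕ) → (Fin n →₀ ℕ) → Prop}
variable {I : Ideal (MvPolynomial (Fin n) K)}

/-- **Core symmetry lemma**: if `v` is the `≺`-largest opposite lead of `u`, then `u` is the
`≺'`-largest opposite lead of `v`. -/
lemma maxOppLead_symm (hcp : cpos c ≠ 0) (hcn : cneg c ≠ 0)
    (hlt : IsTermOrder n lt) (hlt' : IsTermOrder n lt')
    (hlo : lt (cpos c) (cneg c)) (hlo' : lt' (cneg c) (cpos c))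
    {u v : Fin n →₀ ℕ} (h : MaxOppLead c lt lt' I u v) : MaxOppLead c lt' lt I v u := by
  obtain ⟨⟨p, hpI, hphom, hplead, hplead'⟩, hmax⟩ := h
  refine ⟨⟨p, hpI, hphom, hplead', hplead⟩, ?_⟩
  intro u' hu'
  by_contra hcon
  push_neg at hcon
  obtain ⟨hne, hnlt'⟩ := hcon
  obtain ⟨q, hqI, hqhom, hqlead', hqlead⟩ := hu'
  -- same degree classes
  have hsuv : SameDeg c u v := hphom u hplead.1 v hplead'.1
  have hsu'v : SameDeg c u' v := hqhom u' hqlead.1 v hqlead'.1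
  have hsuu' : SameDeg c u u' := sameDeg_trans hsuv (sameDeg_symm hsu'v)
  -- `u ≺' u'`, hence `u' ≺ u`
  have hlt'uu' : lt' u u' := by
    rcases hlt'.1 u u' with h1 | h1 | h1
    · exact h1
    · exact absurd h1.symm hne
    · exact absurd h1 hnlt'
  have hltu'u : lt u' u := lt_rev_of_lt' hlt hlt' hlo hlo' hsuu' hlt'uu'
  -- `u ∉ supp q`
  have huq : coeff u q = 0 := by
    by_contra h0
    have hu_mem : u ∈ q.support := mem_support_iff.mpr h0
    rcases eq_or_ne u u' with rfl | hne2
    · exact hlt.2.2.1 u hltu'u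
    · exact termOrder_asymm hlt (hqlead.2 u hu_mem hne2) hltu'u
  -- build `r = C a * p - C b * q`
  set a := coeff v q with ha
  set b := coeff v p with hb
  have ha0 : a ≠ 0 := mem_support_iff.mp hqlead'.1
  have hb0 : b ≠ 0 := mem_support_iff.mp hplead'.1
  set r := C a * p - C b * q with hr
  have hcoeff : ∀ z, coeff z r = a * coeff z p - b * coeff z q := by
    intro z; rw [hr, coeff_sub, coeff_C_mul, coeff_C_mul]
  have hrI : r ∈ I := I.sub_mem (I.mul_mem_left _ hpI) (I.mul_mem_left _ hqI)
  have hsupp : ∀ z ∈ r.support, z ∈ p.support ∪ q.support := by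
    intro z hz
    rw [mem_support_iff, hcoeff] at hz
    rw [Finset.mem_union, mem_support_iff, mem_support_iff]
    by_contra hc2
    push_neg at hc2
    rw [hc2.1, hc2.2, mul_zero, mul_zero, sub_zero] at hz
    exact hz rfl
  -- `u ∈ supp r` and it is the `lt`-lead
  have hur : u ∈ r.support := by
    rw [mem_support_iff, hcoeff, huq, mul_zero, sub_zero]
    exact mul_ne_zero ha0 (mem_support_iff.mp hplead.1)
  have hrlead : IsLeadExp lt r u := by
    refine ⟨hur, fun z hz hzne => ?_⟩
    rcases Finset.mem_union.mp (hsupp z hz) with h1 | h1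
    · exact hplead.2 z h1 hzne
    · rcases eq_or_ne z u' with rfl | h2
      · exact hltu'u
      · exact hlt.2.1 _ _ _ (hqlead.2 z h1 h2) hltu'u
  -- `v ∉ supp r` and everything in `supp r` is `≻ v`
  have hvr : coeff v r = 0 := by rw [hcoeff, ← ha, ← hb]; ring
  have hvlt : ∀ z ∈ r.support, lt v z := by
    intro z hz
    have hzv : z ≠ v := by
      rintro rfl
      rw [← notMem_support_iff] at hvr
      exact hvr hz
    rcases Finset.mem_union.mp (hsupp z hz) with h1 | h1
    · have := hplead'.2 z h1 hzv
      exact lt_rev_of_lt' hlt hlt' hlo hlo' (hphom z h1 v hplead'.1) this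
    · have := hqlead'.2 z h1 hzv
      exact lt_rev_of_lt' hlt hlt' hlo hlo' (hqhom z h1 v hqlead'.1) this
  -- CHom r
  have hrhom : CHom c r := by
    intro x hx y hy
    have hxv : SameDeg c x v := by
      rcases Finset.mem_union.mp (hsupp x hx) with h1 | h1
      · exact hphom x h1 v hplead'.1
      · exact hqhom x h1 v hqlead'.1
    have hyv : SameDeg c y v := by
      rcases Finset.mem_union.mp (hsupp y hy) with h1 | h1
      · exact hphom y h1 v hplead'.1
      · exact hqhom y h1 v hqlead'.1
    exact sameDeg_trans hxv (sameDeg_symm hyv)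
  -- lt'-lead of r
  obtain ⟨v'', hv''s, hv''max⟩ := exists_max_finset hlt' r.support ⟨u, hur⟩
  have hrlead' : IsLeadExp lt' r v'' :=
    ⟨hv''s, fun x hx hxne => (hv''max x hx).resolve_left hxne⟩
  have hopp : OppLead c lt lt' I u v'' := ⟨r, hrI, hrhom, hrlead, hrlead'⟩
  rcases hmax v'' hopp with h1 | h1
  · rw [h1] at hv''s
    rw [← notMem_support_iff] at hvr
    exact hvr hv''s
  · exact termOrder_asymm hlt (hvlt v'' hv''s) h1

end Core
section Main

variable {n : ℕ} {K : Type*} [Field K] {c : Fin n → ℤ}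
variable {lt lt' : (Fin n →₀ ℕ) → (Fin n →₀ ℕ) → Prop}
variable {I : Ideal (MvPolynomial (Fin n) K)}

lemma maxOppLead_unique (hlt : IsTermOrder n lt) {u v1 v2 : Fin n →₀ ℕ}
    (h1 : MaxOppLead c lt lt' I u v1) (h2 : MaxOppLead c lt lt' I u v2) : v1 = v2 := by
  rcases h2.2 v1 h1.1 with h | h
  · exact h
  · rcases h1.2 v2 h2.1 with h' | h'
    · exact h'.symm
    · exact absurd h (termOrder_asymm hlt h')

lemma maxOppLead_symm' (hcp : cpos c ≠ 0) (hcn : cneg c ≠ 0)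
    (hlt : IsTermOrder n lt) (hlt' : IsTermOrder n lt')
    (hlo : lt (cpos c) (cneg c)) (hlo' : lt' (cneg c) (cpos c))
    {u v : Fin n →₀ ℕ} (h : MaxOppLead c lt' lt I v u) : MaxOppLead c lt lt' I u v := by
  have h1 : MaxOppLead (-c) lt' lt I v u := maxOppLead_neg.mpr h
  have h2 := maxOppLead_symm (c := -c) (by rw [cpos_neg]; exact hcn) (by rw [cneg_neg]; exact hcp)
    hlt' hlt (by rw [cpos_neg, cneg_neg]; exact hlo') (by rw [cpos_neg, cneg_neg]; exact hlo) h1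
  exact maxOppLead_neg.mp h2

end Main
/-- The map `m ↦ max_≺ { in_≺'(p) : p ∈ I homogeneous, in_≺(p) = m }`
is well defined on `Mon M` and is an arrow map `Mon M → Mon N` with respect to the
`ℤⁿ/ℤc`-grading and the term order `≺`. -/
theorem maxOppLead_isArrowMap {n : ℕ} {K : Type*} [Field K] (c : Fin n → ℤ)
    (hcp : cpos c ≠ 0) (hcn : cneg c ≠ 0)
    (lt lt' : (Fin n →₀ ℕ) → (Fin n →₀ ℕ) → Prop)
    (hlt : IsTermOrder n lt) (hlt' : IsTermOrder n lt')
    (hlo : lt (cpos c) (cneg c)) (hlo' : lt' (cneg c) (cpos c))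
    (I : Ideal (MvPolynomial (Fin n) K)) (hI : CHomIdeal c I)
    (M N : Ideal (MvPolynomial (Fin n) K))
    (hM : M = initialIdeal lt I) (hN : N = initialIdeal lt' I) :
    ∃ f : (Fin n →₀ ℕ) → (Fin n →₀ ℕ),
      (∀ u ∈ Mon M, MaxOppLead c lt lt' I u (f u)) ∧ IsArrowMap c lt M N f := by
  classical
  subst hM hN
  set f : (Fin n →₀ ℕ) → (Fin n →₀ ℕ) := fun u =>
    if h : ∃ v, MaxOppLead c lt lt' I u v then h.choose else u with hfdef
  have hwell : ∀ u ∈ Mon (initialIdeal lt I), MaxOppLead c lt lt' I u (f u) := by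
    intro u hu
    have hex := exists_maxOppLead hcp hcn hlt hlt' hI hu
    rw [hfdef]
    simp only [dif_pos hex]
    exact hex.choose_spec
  refine ⟨f, hwell, ?_, ?_, ?_, ?_, ?_⟩
  -- (1) BijOn
  · refine ⟨?_, ?_, ?_⟩
    · intro u hu
      obtain ⟨⟨p, hpI, hphom, _, hplead'⟩, _⟩ := hwell u hu
      exact (mon_initial hI hlt').mpr ⟨p, hpI, hphom, hplead'⟩
    · intro u1 hu1 u2 hu2 heq
      have h1 := maxOppLead_symm hcp hcn hlt hlt' hlo hlo' (hwell u1 hu1)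
      have h2 := maxOppLead_symm hcp hcn hlt hlt' hlo hlo' (hwell u2 hu2)
      rw [heq] at h1
      exact maxOppLead_unique hlt' h1 h2
    · intro v hv
      obtain ⟨u, hu⟩ := exists_maxOppLead hcp hcn hlt' hlt hI hv
      have huM : u ∈ Mon (initialIdeal lt I) := by
        obtain ⟨⟨p, hpI, hphom, _, hplead⟩, _⟩ := hu
        exact (mon_initial hI hlt).mpr ⟨p, hpI, hphom, hplead⟩
      have hfu : MaxOppLead c lt lt' I u v :=
        maxOppLead_symm' hcp hcn hlt hlt' hlo hlo' hu
      exact ⟨u, huM, maxOppLead_unique hlt (hwell u huM) hfu⟩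
  -- (2) degree preserving
  · intro u hu
    exact oppLead_sameDeg (hwell u hu).1
  -- (3) f u ⪯ u
  · intro u hu
    obtain ⟨⟨p, hpI, hphom, hplead, hplead'⟩, _⟩ := hwell u hu
    rcases eq_or_ne (f u) u with h | h
    · exact Or.inl h
    · exact Or.inr (hplead.2 (f u) hplead'.1 h)
  -- (4) arrow condition on multiples
  · intro u hu w ℓ ℓ' hd hd'
    have hle : ∀ z ∈ Mon (initialIdeal lt I), f z = z ∨ lt (f z) z := by
      intro z hz
      obtain ⟨⟨p, hpI, hphom, hplead, hplead'⟩, _⟩ := hwell z hz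
      rcases eq_or_ne (f z) z with h | h
      · exact Or.inl h
      · exact Or.inr (hplead.2 (f z) hplead'.1 h)
    have huw : u + w ∈ Mon (initialIdeal lt I) := mon_add hu w
    obtain ⟨⟨p, hpI, hphom, hplead, hplead'⟩, _⟩ := hwell u hu
    have hopp : OppLead c lt lt' I (u + w) (f u + w) := by
      refine ⟨monomial w 1 * p, Ideal.mul_mem_left _ _ hpI, chom_monomial_mul hphom w, ?_, ?_⟩
      · have := lead_monomial_mul hlt hplead w
        rwa [add_comm] at this
      · have := lead_monomial_mul hlt' hplead' w
        rwa [add_comm] at this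
    have hm : f u + w = f (u + w) ∨ lt (f u + w) (f (u + w)) :=
      (hwell (u + w) huw).2 (f u + w) hopp
    have hℓ : ℓ ≤ 0 := distRel_nonpos hcp hlt hlo hd (hle u hu)
    have hℓ' : ℓ' ≤ 0 := distRel_nonpos hcp hlt hlo hd' (hle (u + w) huw)
    have hcomb : DistRel c (f (u + w)) (f u + w) (-ℓ' + ℓ) :=
      distRel_trans (distRel_symm hd') (distRel_add_right w hd)
    have hfin : -ℓ' + ℓ ≤ 0 := distRel_nonpos hcp hlt hlo hcomb hm
    rw [abs_of_nonpos hℓ, abs_of_nonpos hℓ']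
    omega
  -- (5) arrow condition on preimages
  · intro u hu u' hu' w ℓ ℓ' hfw hd hd'
    have hle : ∀ z ∈ Mon (initialIdeal lt I), f z = z ∨ lt (f z) z := by
      intro z hz
      obtain ⟨⟨p, hpI, hphom, hplead, hplead'⟩, _⟩ := hwell z hz
      rcases eq_or_ne (f z) z with h | h
      · exact Or.inl h
      · exact Or.inr (hplead.2 (f z) hplead'.1 h)
    obtain ⟨⟨p, hpI, hphom, hplead, hplead'⟩, _⟩ := hwell u hu
    have hopp : OppLead c lt' lt I (f u') (u + w) := by
      refine ⟨monomial w 1 * p, Ideal.mul_mem_left _ _ hpI, chom_monomial_mul hphom w, ?_, ?_⟩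
      · have := lead_monomial_mul hlt' hplead' w
        rwa [add_comm, ← hfw] at this
      · have := lead_monomial_mul hlt hplead w
        rwa [add_comm] at this
    have hmax' : MaxOppLead c lt' lt I (f u') u' :=
      maxOppLead_symm hcp hcn hlt hlt' hlo hlo' (hwell u' hu')
    have hm : u + w = u' ∨ lt' (u + w) u' := hmax'.2 (u + w) hopp
    -- same degree of u + w and u'
    have hsd : SameDeg c (u + w) u' := by
      have h1 : SameDeg c (u + w) (f u') := ⟨ℓ, hfw ▸ distRel_add_right w hd⟩
      have h2 : SameDeg c u' (f u') := oppLead_sameDeg (hwell u' hu').1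
      exact sameDeg_trans h1 (sameDeg_symm h2)
    have hm2 : u' = u + w ∨ lt u' (u + w) := by
      rcases hm with h | h
      · exact Or.inl h.symm
      · exact Or.inr (lt_rev_of_lt' hlt hlt' hlo hlo' hsd h)
    have hℓ : ℓ ≤ 0 := distRel_nonpos hcp hlt hlo hd (hle u hu)
    have hℓ' : ℓ' ≤ 0 := distRel_nonpos hcp hlt hlo hd' (hle u' hu')
    have hcomb : DistRel c (u + w) u' (ℓ + -ℓ') :=
      distRel_trans (hfw ▸ distRel_add_right w hd) (distRel_symm hd')
    have hfin : ℓ + -ℓ' ≤ 0 := distRel_nonpos hcp hlt hlo hcomb hm2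
    rw [abs_of_nonpos hℓ, abs_of_nonpos hℓ']
    omega
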